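/- arXiv:1810.11741 — 4 statements merged into one kernel-verified Lean document; each statement's English description precedes it below -/
import Mathlib

section
/- Let $K \in H^1([0,1]; \mathbb{R}^{d\times d})$ (so $K$ is $\tfrac{1}{2}$-Hölder continuous with constant $L$), and for each $n \in \mathbb{N}$ let $K^{(n)} : \{0,\dots,n-1\} \to \mathbb{R}^{d\times d}$. Define the piecewise constant extension $\tilde K^{(n)}(t) = K^{(n)}_i$ for $t \in [i/n, (i+1)/n)$. Suppose there exists $C_1 > 0$ such that for all $n$, $\|\tilde K^{(n)} - K\|_{L^2([0,1])} \leq C_1 n^{-1}$. Then $\max_{0 \leq i \leq n-1} \|K(i/n) - K^{(n)}_i\| \to 0$ as $n \to \infty$. -/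
open Set Filter Topology MeasureTheory

/-!
On the grid cell `[i/n, (i+1)/n]` the Hölder bound keeps `K t` within `L/√n` of `K (i/n)`, so if
`δ = ‖K (i/n) - Kₙ i‖ > L/√n` the integrand is at least `(δ - L/√n)²` on a set of length `1/n`.
Comparing with the total bound `(C₁/n)²` gives the rate `δ ≤ (L + |C₁|)/√n`.
-/

section

variable {E : Type*} [NormedAddCommGroup E]

lemma continuousOn_of_norm_sub_le_mul_sqrt {K : ℝ → E} {s : Set ℝ} {L : ℝ}
    (hK : ∀ x ∈ s, ∀ y ∈ s, ‖K x - K y‖ ≤ L * √|x - y|) : ContinuousOn K s := by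
  intro t ht
  rw [ContinuousWithinAt, tendsto_iff_norm_sub_tendsto_zero]
  have hbound : Tendsto (fun x => L * √|x - t|) (𝓝[s] t) (𝓝 0) := by
    have : Continuous fun x => L * √|x - t| := by fun_prop
    simpa using (this.tendsto t).mono_left nhdsWithin_le_nhds
  exact squeeze_zero' (Eventually.of_forall fun _ => norm_nonneg _)
    (eventually_nhdsWithin_of_forall fun x hx => hK x hx t ht) hbound

lemma Nat.floor_mul_eq_of_mem_Ioo {n j : ℕ} (hn : 0 < n) {t : ℝ}
    (ht : t ∈ Ioo ((j : ℝ) / n) ((j + 1) / n)) : ⌊(n : ℝ) * t⌋₊ = j := by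
  have hn' : (0 : ℝ) < n := by exact_mod_cast hn
  obtain ⟨hlo, hhi⟩ := ht
  rw [div_lt_iff₀' hn'] at hlo
  rw [lt_div_iff₀' hn'] at hhi
  exact (Nat.floor_eq_iff ((Nat.cast_nonneg j).trans hlo.le)).2 ⟨hlo.le, hhi⟩

lemma intervalIntegrable_floor_mul {F : ℕ → ℝ → E} {n : ℕ} (hn : 0 < n)
    (hF : ∀ j < n, IntervalIntegrable (F j) volume ((j : ℝ) / n) ((j + 1) / n)) :
    IntervalIntegrable (fun t => F ⌊(n : ℝ) * t⌋₊ t) volume 0 1 := by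
  have hcell (j : ℕ) (hj : j < n) :
      IntervalIntegrable (fun t => F ⌊(n : ℝ) * t⌋₊ t) volume ((j : ℝ) / n) ((j + 1) / n) := by
    refine (intervalIntegrable_congr_uIoo ?_).2 (hF j hj)
    rw [uIoo_of_le (by gcongr; linarith)]
    exact fun t ht => by simp only [Nat.floor_mul_eq_of_mem_Ioo hn ht]
  have hn' : (n : ℝ) ≠ 0 := by exact_mod_cast hn.ne'
  have h := IntervalIntegrable.trans_iterate (a := fun k : ℕ => (k : ℝ) / n)
    fun k hk => by simpa using hcell k hk
  rwa [Nat.cast_zero, zero_div, div_self hn'] at h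

lemma norm_sub_le_of_integral_sq_le {g : ℝ → E} {c : E} {a b ρ M : ℝ} (hab : a < b)
    (hg : IntervalIntegrable (fun t => ‖c - g t‖ ^ 2) volume a b)
    (hosc : ∀ t ∈ Icc a b, ‖g a - g t‖ ≤ ρ)
    (hint : ∫ t in a..b, ‖c - g t‖ ^ 2 ≤ (b - a) * M ^ 2) :
    ‖g a - c‖ ≤ ρ + |M| := by
  set r := ‖g a - c‖ - ρ
  rcases le_or_gt r 0 with hr | hr
  · linarith [abs_nonneg M]
  have hlow (t : ℝ) (ht : t ∈ Icc a b) : r ^ 2 ≤ ‖c - g t‖ ^ 2 := by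
    have := norm_sub_le_norm_sub_add_norm_sub (g a) (g t) c
    rw [norm_sub_rev (g t)] at this
    have : r ≤ ‖c - g t‖ := by linarith [hosc t ht]
    gcongr
  have hsq : (b - a) * r ^ 2 ≤ (b - a) * M ^ 2 :=
    calc (b - a) * r ^ 2 = ∫ _ in a..b, r ^ 2 := by simp
      _ ≤ ∫ t in a..b, ‖c - g t‖ ^ 2 :=
        intervalIntegral.integral_mono_on hab.le intervalIntegrable_const hg hlow
      _ ≤ (b - a) * M ^ 2 := hint
  have := sq_le_sq.1 (le_of_mul_le_mul_left hsq (sub_pos.2 hab))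
  linarith [le_abs_self r]

lemma Icc_div_natCast_subset_Icc_zero_one {n j : ℕ} (hj : j < n) :
    Icc ((j : ℝ) / n) ((j + 1) / n) ⊆ Icc 0 1 := by
  have hn : (0 : ℝ) < n := by exact_mod_cast (Nat.zero_lt_of_lt hj)
  refine Icc_subset_Icc (by positivity) ((div_le_one hn).2 ?_)
  exact_mod_cast hj

lemma integral_le_integral_floor_mul {F : ℕ → ℝ → ℝ} {n i : ℕ} (hi : i < n)
    (hF₀ : ∀ j t, 0 ≤ F j t)
    (hF : ∀ j < n, IntervalIntegrable (F j) volume ((j : ℝ) / n) ((j + 1) / n)) :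
    ∫ t in (i : ℝ) / n..(i + 1) / n, F i t ≤ ∫ t in (0 : ℝ)..1, F ⌊(n : ℝ) * t⌋₊ t := by
  have hn : 0 < n := Nat.zero_lt_of_lt hi
  obtain ⟨hi₀, hi₁⟩ := Icc_subset_Icc_iff (by gcongr; linarith) |>.1
    (Icc_div_natCast_subset_Icc_zero_one hi)
  calc ∫ t in (i : ℝ) / n..(i + 1) / n, F i t
      = ∫ t in (i : ℝ) / n..(i + 1) / n, F ⌊(n : ℝ) * t⌋₊ t :=
        intervalIntegral.integral_congr_Ioo_of_le (by gcongr; linarith)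
          fun t ht => by simp only [Nat.floor_mul_eq_of_mem_Ioo hn ht]
    _ ≤ ∫ t in (0 : ℝ)..1, F ⌊(n : ℝ) * t⌋₊ t :=
        intervalIntegral.integral_mono_interval hi₀ (by gcongr; linarith) hi₁
          (Eventually.of_forall fun _ => hF₀ _ _) (intervalIntegrable_floor_mul hn hF)

theorem norm_sub_le_of_integral_floor_mul_sq_le {K : ℝ → E} {c : ℕ → E} {L C : ℝ} {n i : ℕ}
    (hL : 0 ≤ L) (hK : ∀ s ∈ Icc (0 : ℝ) 1, ∀ t ∈ Icc (0 : ℝ) 1, ‖K s - K t‖ ≤ L * √|s - t|)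
    (hL2 : ∫ t in (0 : ℝ)..1, ‖c ⌊(n : ℝ) * t⌋₊ - K t‖ ^ 2 ≤ (C / n) ^ 2) (hi : i < n) :
    ‖K (i / n) - c i‖ ≤ (L + |C|) / √n := by
  have hn : (0 : ℝ) < n := by exact_mod_cast Nat.zero_lt_of_lt hi
  have hcell := Icc_div_natCast_subset_Icc_zero_one hi
  have hcell_int (j : ℕ) (hj : j < n) :
      IntervalIntegrable (fun t => ‖c j - K t‖ ^ 2) volume ((j : ℝ) / n) ((j + 1) / n) := by
    refine ContinuousOn.intervalIntegrable ?_
    rw [uIcc_of_le (by gcongr; linarith)]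
    exact (continuousOn_const.sub ((continuousOn_of_norm_sub_le_mul_sqrt hK).mono
      (Icc_div_natCast_subset_Icc_zero_one hj))).norm.pow 2
  have hwidth : ((i : ℝ) + 1) / n - i / n = 1 / n := by ring
  have hosc (t : ℝ) (ht : t ∈ Icc ((i : ℝ) / n) ((i + 1) / n)) : ‖K (i / n) - K t‖ ≤ L / √n := by
    have hdist : |(i : ℝ) / n - t| ≤ 1 / n := by
      rw [abs_sub_comm, abs_of_nonneg (by linarith [ht.1])]
      linarith [ht.2]
    calc ‖K (i / n) - K t‖ ≤ L * √|(i : ℝ) / n - t| :=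
          hK _ (hcell ⟨le_rfl, by gcongr; linarith⟩) t (hcell ht)
      _ ≤ L * √(1 / n) := by gcongr
      _ = L / √n := by rw [one_div, Real.sqrt_inv, div_eq_mul_inv]
  have hint : ∫ t in (i : ℝ) / n..(i + 1) / n, ‖c i - K t‖ ^ 2
      ≤ ((i + 1) / n - i / n) * (C / √n) ^ 2 :=
    calc ∫ t in (i : ℝ) / n..(i + 1) / n, ‖c i - K t‖ ^ 2
        ≤ ∫ t in (0 : ℝ)..1, ‖c ⌊(n : ℝ) * t⌋₊ - K t‖ ^ 2 :=
          integral_le_integral_floor_mul (F := fun j t => ‖c j - K t‖ ^ 2) hi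
            (fun _ _ => by positivity) hcell_int
      _ ≤ (C / n) ^ 2 := hL2
      _ = ((i + 1) / n - i / n) * (C / √n) ^ 2 := by
          rw [hwidth, div_pow C √(n : ℝ), Real.sq_sqrt hn.le]; ring
  calc ‖K (i / n) - c i‖ ≤ L / √n + |C / √n| :=
        norm_sub_le_of_integral_sq_le (by gcongr; linarith) (hcell_int i hi) hosc hint
    _ = (L + |C|) / √n := by rw [abs_div, abs_of_nonneg (Real.sqrt_nonneg _), add_div]

end

theorem grid_convergence_from_L2_rate_general
    (d : ℕ) (K : ℝ → EuclideanSpace ℝ (Fin d × Fin d)) (L : ℝ) (hL : 0 < L)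
    (hHolder : ∀ s ∈ Icc (0:ℝ) 1, ∀ t ∈ Icc (0:ℝ) 1, ‖K s - K t‖ ≤ L * Real.sqrt |s - t|)
    (Kn : ℕ → ℕ → EuclideanSpace ℝ (Fin d × Fin d))
    (C₁ : ℝ)
    (hL2 : ∀ n : ℕ, 1 ≤ n →
      (∫ t in (0:ℝ)..1, ‖Kn n ⌊(n : ℝ) * t⌋₊ - K t‖ ^ 2) ≤ (C₁ / n) ^ 2) :
    ∀ ε > 0, ∃ N : ℕ, ∀ n ≥ N, ∀ i < n, ‖K (i / n) - Kn n i‖ < ε := by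
  intro ε hε
  have hrate : Tendsto (fun n : ℕ => (L + |C₁|) / √n) atTop (𝓝 0) :=
    tendsto_const_nhds.div_atTop (Real.tendsto_sqrt_atTop.comp tendsto_natCast_atTop_atTop)
  obtain ⟨N, hN⟩ := eventually_atTop.1 (hrate.eventually (gt_mem_nhds hε))
  refine ⟨N, fun n hn i hi => lt_of_le_of_lt ?_ (hN n hn)⟩
  exact norm_sub_le_of_integral_floor_mul_sq_le hL.le hHolder (hL2 n (by omega)) hi

/-- If piecewise-constant discretizations converge in `L²([0,1])` at rate `O(1/n)` to a
`½`-Hölder continuous function `K` (e.g. the Hölder representative of an `H¹` function),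
then they converge uniformly at the grid points. -/
theorem grid_convergence_from_L2_rate
    (d : ℕ) (K : ℝ → EuclideanSpace ℝ (Fin d × Fin d)) (L : ℝ) (hL : 0 < L)
    (hHolder : ∀ s ∈ Icc (0:ℝ) 1, ∀ t ∈ Icc (0:ℝ) 1, ‖K s - K t‖ ≤ L * Real.sqrt |s - t|)
    (Kn : ℕ → ℕ → EuclideanSpace ℝ (Fin d × Fin d))
    (C₁ : ℝ) (hC₁ : 0 < C₁)
    (hL2 : ∀ n : ℕ, 1 ≤ n →
      (∫ t in (0:ℝ)..1, ‖Kn n ⌊(n : ℝ) * t⌋₊ - K t‖ ^ 2) ≤ (C₁ / n) ^ 2) :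
    ∀ ε > 0, ∃ N : ℕ, ∀ n ≥ N, ∀ i < n, ‖K (i / n) - Kn n i‖ < ε :=
  grid_convergence_from_L2_rate_general d K L hL hHolder Kn C₁ hL2
end

section
/- Let $f_n \in L^2([0,1]; \mathbb{R}^\kappa)$, $f \in L^2([0,1]; \mathbb{R}^\kappa)$ with $f_n \to f$ in $L^2$, and let $\varepsilon_n \to 0^+$. If $\liminf_{n\to\infty} \frac{1}{\varepsilon_n^2} \int_{\varepsilon_n}^1 \|f_n(t) - f_n(t - \varepsilon_n)\|^2 dt < \infty$, then $f \in H^1([0,1]; \mathbb{R}^\kappa)$ and $\liminf_{n\to\infty} \frac{1}{\varepsilon_n^2} \int_{\varepsilon_n}^1 \|f_n(t) - f_n(t - \varepsilon_n)\|^2 dt \geq \int_0^1 \|\nabla f(t)\|^2 dt$. -/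
/-!
Extend `fₙ` and `f` by zero outside `[0,1]`. The finite-difference energy of `fₙ` is exactly the
squared `L²(0,1)` norm of the forward difference quotient `gₙ` of `fₙ`, cut off at `1 - εₙ`. Along a
subsequence realising the liminf these quotients are bounded, so a further subsequence converges
weakly in `L²(0,1)` to some `G`, with `‖G‖²` at most the liminf by weak lower semicontinuity of the
norm. The integral of `gₙ` over `[0,x]` is the difference at `x` and at `0` of the Steklov averages
`εₙ⁻¹ ∫ₓ^{x+εₙ} fₙ`. These converge to `f` almost everywhere along a subsequence: they differ from
the Steklov averages of `f` by functions tending to zero in `L¹`, and the Steklov averages of `f`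
converge to `f` by Lebesgue's differentiation theorem. In the limit, `f x = f x₀ + ∫_{x₀}^x G`
for almost all `x` and `x₀`.
-/

open Set Filter MeasureTheory Topology
open scoped ENNReal InnerProductSpace

noncomputable section

section Steklov

variable {E : Type*} [NormedAddCommGroup E] [NormedSpace ℝ E]

def diffQuot (h : ℝ) (u : ℝ → E) (t : ℝ) : E := h⁻¹ • (u (t + h) - u t)

def steklov (h : ℝ) (u : ℝ → E) (x : ℝ) : E := h⁻¹ • ∫ t in x..x + h, u t

theorem steklov_eq_slope (h : ℝ) {u : ℝ → E} (hu : Integrable u) (x : ℝ) :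
    steklov h u x = slope (fun y => ∫ t in (0:ℝ)..y, u t) x (x + h) := by
  rw [steklov, slope_def_module, add_sub_cancel_left,
    intervalIntegral.integral_interval_sub_left hu.intervalIntegrable hu.intervalIntegrable]

theorem steklov_eq_integral_comp_add_mul {h : ℝ} (hh : h ≠ 0) (u : ℝ → E) (x : ℝ) :
    steklov h u x = ∫ s in (0:ℝ)..1, u (x + h * s) := by
  rw [intervalIntegral.integral_comp_add_mul u hh, mul_zero, add_zero, mul_one, steklov]

theorem continuous_steklov (h : ℝ) {u : ℝ → E} (hu : Integrable u) :
    Continuous (steklov h u) := by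
  have hP := intervalIntegral.continuous_primitive (fun _ _ => hu.intervalIntegrable) 0
  simp only [funext (steklov_eq_slope h hu), slope_def_module, add_sub_cancel_left]
  fun_prop

theorem steklov_sub (h : ℝ) {u v : ℝ → E} (hu : Integrable u) (hv : Integrable v) :
    steklov h (u - v) = steklov h u - steklov h v := by
  funext x
  simp only [steklov, Pi.sub_apply, ← smul_sub,
    intervalIntegral.integral_sub hu.intervalIntegrable hv.intervalIntegrable]

theorem integral_diffQuot (h : ℝ) {u : ℝ → E} (hu : Integrable u) (a b : ℝ) :
    ∫ t in a..b, diffQuot h u t = steklov h u b - steklov h u a := by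
  have hi : ∀ a b, IntervalIntegrable u volume a b := fun _ _ => hu.intervalIntegrable
  simp only [diffQuot, steklov]
  rw [intervalIntegral.integral_smul,
    intervalIntegral.integral_sub (hu.comp_add_right h).intervalIntegrable (hi a b),
    intervalIntegral.integral_comp_add_right, ← smul_sub,
    intervalIntegral.integral_interval_sub_interval_comm (hi _ _) (hi _ _) (hi _ _),
    intervalIntegral.integral_symm a, intervalIntegral.integral_symm b, neg_sub_neg]

theorem eLpNorm_one_steklov_le {h : ℝ} (hh : 0 < h) {d : ℝ → E}
    (hd : AEStronglyMeasurable d) : eLpNorm (steklov h d) 1 volume ≤ eLpNorm d 1 volume := by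
  set d' := hd.mk d
  have hstek : steklov h d = steklov h d' := funext fun x =>
    congrArg _ (intervalIntegral.integral_congr_ae (hd.ae_eq_mk.mono fun t ht _ => ht))
  have hmeas : Measurable fun p : ℝ × ℝ => ‖d' (p.1 + h * p.2)‖ₑ :=
    (hd.stronglyMeasurable_mk.comp_measurable (by fun_prop)).enorm
  rw [hstek, eLpNorm_congr_ae hd.ae_eq_mk, eLpNorm_one_eq_lintegral_enorm,
    eLpNorm_one_eq_lintegral_enorm]
  calc ∫⁻ x, ‖steklov h d' x‖ₑ
      ≤ ∫⁻ x, ∫⁻ s in Ioc 0 1, ‖d' (x + h * s)‖ₑ := lintegral_mono fun x => by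
        rw [steklov_eq_integral_comp_add_mul hh.ne', intervalIntegral.integral_of_le zero_le_one]
        exact enorm_integral_le_lintegral_enorm _
    _ = ∫⁻ s in Ioc 0 1, ∫⁻ x, ‖d' (x + h * s)‖ₑ := lintegral_lintegral_swap hmeas.aemeasurable
    _ = ∫⁻ t, ‖d' t‖ₑ := by simp [lintegral_add_right_eq_self (fun t => ‖d' t‖ₑ)]

variable [CompleteSpace E]

theorem ae_tendsto_steklov {u : ℝ → E} (hu : Integrable u) :
    ∀ᵐ x, ∀ {ι : Type*} {l : Filter ι} {h : ι → ℝ}, Tendsto h l (𝓝[>] 0) →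
      Tendsto (fun k => steklov (h k) u x) l (𝓝 (u x)) := by
  filter_upwards [_root_.LocallyIntegrable.ae_hasDerivAt_integral hu.locallyIntegrable]
    with x hx ι l h hh
  obtain ⟨hh0, hhpos⟩ := tendsto_nhdsWithin_iff.1 hh
  have hxh : Tendsto (fun k => x + h k) l (𝓝[≠] x) :=
    tendsto_nhdsWithin_iff.2 ⟨by simpa using hh0.const_add x,
      hhpos.mono fun k hk => by simpa using (ne_of_gt hk)⟩
  simp only [steklov_eq_slope _ hu]
  exact (hasDerivAt_iff_tendsto_slope.1 (hx 0)).comp hxh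

theorem exists_seq_ae_tendsto_steklov {u : ℕ → ℝ → E} {v : ℝ → E} {h : ℕ → ℝ}
    (hu : ∀ k, Integrable (u k)) (hv : Integrable v)
    (huv : Tendsto (fun k => eLpNorm (u k - v) 1 volume) atTop (𝓝 0))
    (hh : Tendsto h atTop (𝓝[>] 0)) :
    ∃ ψ : ℕ → ℕ, StrictMono ψ ∧
      ∀ᵐ x, Tendsto (fun k => steklov (h (ψ k)) (u (ψ k)) x) atTop (𝓝 (v x)) := by
  have hdiff : Tendsto (fun k => eLpNorm (steklov (h k) (u k) - steklov (h k) v - 0) 1 volume)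
      atTop (𝓝 0) := by
    refine tendsto_of_tendsto_of_tendsto_of_le_of_le' tendsto_const_nhds huv
      (Eventually.of_forall fun _ => bot_le) ?_
    filter_upwards [(tendsto_nhdsWithin_iff.1 hh).2] with k hk
    rw [sub_zero, ← steklov_sub _ (hu k) hv]
    exact eLpNorm_one_steklov_le hk ((hu k).sub hv).aestronglyMeasurable
  obtain ⟨ψ, hψ, hψae⟩ := (tendstoInMeasure_of_tendsto_eLpNorm (g := 0) one_ne_zero
    (fun k => ((continuous_steklov _ (hu k)).sub (continuous_steklov _ hv)).aestronglyMeasurable)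
    aestronglyMeasurable_zero hdiff).exists_seq_tendsto_ae
  refine ⟨ψ, hψ, ?_⟩
  filter_upwards [hψae, ae_tendsto_steklov hv] with x hdiffx hvx
  simpa using (hvx (hh.comp hψ.tendsto_atTop)).add hdiffx

end Steklov

theorem exists_ae_eq_const_add_of_tendsto_sub {α E ι : Type*} [MeasurableSpace α]
    {μ : Measure α} [TopologicalSpace E] [AddCommGroup E] [IsTopologicalAddGroup E] [T2Space E]
    {l : Filter ι} [l.NeBot] {S : ι → α → E} {v H : α → E} {s : Set α} {x₀ : α}
    (hs : μ s ≠ 0) (hS : ∀ᵐ x ∂μ, Tendsto (S · x) l (𝓝 (v x)))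
    (hH : ∀ᵐ x ∂μ, x ∈ s → Tendsto (fun k => S k x - S k x₀) l (𝓝 (H x))) :
    ∃ c, ∀ᵐ x ∂μ, x ∈ s → v x = c + H x := by
  obtain ⟨x₁, hx₁s, hSx₁, hHx₁⟩ :=
    ((frequently_ae_mem_iff.2 hs).and_eventually (hS.and hH)).exists
  have hx₀ : Tendsto (S · x₀) l (𝓝 (v x₁ - H x₁)) := by
    simpa only [sub_sub_cancel] using hSx₁.sub (hHx₁ hx₁s)
  refine ⟨v x₁ - H x₁, ?_⟩
  filter_upwards [hS, hH] with x hSx hHx hxs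
  exact tendsto_nhds_unique hSx (by simpa only [add_sub_cancel] using hx₀.add (hHx hxs))

section WeakConvergence

variable {H : Type*} [NormedAddCommGroup H] [InnerProductSpace ℝ H]

theorem exists_seq_tendsto_inner_of_norm_le [CompleteSpace H] [TopologicalSpace.SeparableSpace H]
    {g : ℕ → H} {C : ℝ} (hg : ∀ k, ‖g k‖ ≤ C) :
    ∃ G : H, ∃ ψ : ℕ → ℕ, StrictMono ψ ∧
      ∀ w, Tendsto (fun k => ⟪g (ψ k), w⟫_ℝ) atTop (𝓝 ⟪G, w⟫_ℝ) := by
  let T := InnerProductSpace.toDual ℝ H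
  obtain ⟨φ, -, ψ, hψ, hlim⟩ := WeakDual.isSeqCompact_closedBall ℝ H 0 C
    (x := fun k => StrongDual.toWeakDual (T (g k))) fun k => by simpa using hg k
  refine ⟨T.symm (WeakDual.toStrongDual φ), ψ, hψ, fun w => ?_⟩
  simpa [T, Function.comp_def] using (WeakDual.eval_continuous w).continuousAt.tendsto.comp hlim

theorem norm_le_of_tendsto_inner {g : ℕ → H} {G : H} {r : ℝ}
    (hgG : ∀ w, Tendsto (fun k => ⟪g k, w⟫_ℝ) atTop (𝓝 ⟪G, w⟫_ℝ))
    (hr : Tendsto (fun k => ‖g k‖) atTop (𝓝 r)) : ‖G‖ ≤ r := by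
  have hr0 : 0 ≤ r := ge_of_tendsto' hr fun k => norm_nonneg _
  have hsq : ‖G‖ ^ 2 ≤ r * ‖G‖ := by
    rw [← real_inner_self_eq_norm_sq]
    exact le_of_tendsto_of_tendsto' (hgG G) (hr.mul_const _) fun k => real_inner_le_norm _ _
  nlinarith [norm_nonneg G]

theorem exists_seq_tendsto_inner_norm_sq_le_liminf [CompleteSpace H]
    [TopologicalSpace.SeparableSpace H] {g : ℕ → H} {A : ℝ} (hA : ∃ᶠ n in atTop, ‖g n‖ ^ 2 ≤ A) :
    ∃ φ : ℕ → ℕ, Tendsto φ atTop atTop ∧ ∃ G : H,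
      (∀ w, Tendsto (fun k => ⟪g (φ k), w⟫_ℝ) atTop (𝓝 ⟪G, w⟫_ℝ)) ∧
      ‖G‖ ^ 2 ≤ liminf (fun n => ‖g n‖ ^ 2) atTop := by
  obtain ⟨φ, hφL, hφ⟩ := exists_seq_tendsto_liminf (IsCoboundedUnder.of_frequently_le hA)
    (isBoundedUnder_of_eventually_ge (.of_forall fun n => sq_nonneg ‖g n‖))
  have hnorm : Tendsto (fun j => ‖g (φ j)‖) atTop (𝓝 √(liminf (fun n => ‖g n‖ ^ 2) atTop)) := by
    simpa [Function.comp_def, Real.sqrt_sq] using hφL.sqrt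
  obtain ⟨C, hC⟩ := hnorm.bddAbove_range
  obtain ⟨G, ψ, hψ, hgG⟩ := exists_seq_tendsto_inner_of_norm_le fun j => hC ⟨j, rfl⟩
  refine ⟨φ ∘ ψ, hφ.comp hψ.tendsto_atTop, G, hgG, ?_⟩
  rw [← Real.le_sqrt (norm_nonneg _) (ge_of_tendsto' hφL fun _ => sq_nonneg _)]
  exact norm_le_of_tendsto_inner hgG (hnorm.comp hψ.tendsto_atTop)

theorem tendsto_of_forall_tendsto_inner [FiniteDimensional ℝ H] {ι : Type*} {l : Filter ι}
    {x : ι → H} {a : H} (h : ∀ v, Tendsto (fun k => ⟪v, x k⟫_ℝ) l (𝓝 ⟪v, a⟫_ℝ)) :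
    Tendsto x l (𝓝 a) := by
  let b := stdOrthonormalBasis ℝ H
  simpa only [b.sum_repr'] using
    tendsto_finsetSum Finset.univ fun i _ => (h (b i)).smul_const (b i)

end WeakConvergence

section L2

variable {α E : Type*} [MeasurableSpace α] {μ : Measure α} [NormedAddCommGroup E]
  [InnerProductSpace ℝ E]

theorem L2.norm_sq_eq_integral_norm_sq (F : Lp E 2 μ) : ‖F‖ ^ 2 = ∫ x, ‖F x‖ ^ 2 ∂μ := by
  simp only [← real_inner_self_eq_norm_sq, L2.inner_def]

theorem tendsto_setIntegral_of_tendsto_inner [FiniteDimensional ℝ E] {ι : Type*} {l : Filter ι}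
    {g : ι → Lp E 2 μ} {G : Lp E 2 μ} (hgG : ∀ w, Tendsto (fun k => ⟪g k, w⟫_ℝ) l (𝓝 ⟪G, w⟫_ℝ))
    {s : Set α} (hs : MeasurableSet s) (hμs : μ s ≠ ∞) :
    Tendsto (fun k => ∫ x in s, g k x ∂μ) l (𝓝 (∫ x in s, G x ∂μ)) := by
  refine tendsto_of_forall_tendsto_inner fun v => ?_
  have key : ∀ F : Lp E 2 μ, ⟪v, ∫ x in s, F x ∂μ⟫_ℝ = ⟪F, indicatorConstLp 2 hs hμs v⟫_ℝ :=
    fun F => by rw [← L2.inner_indicatorConstLp_eq_inner_setIntegral ℝ hs hμs v, real_inner_comm]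
  simpa only [key] using hgG _

end L2

section UnitInterval

variable {E : Type*} [NormedAddCommGroup E] [NormedSpace ℝ E]

/-- Cut off at `1 - h`, the difference quotient only involves the values of `u` on `[0,1]`. -/
def truncDiffQuot (h : ℝ) (u : ℝ → E) : ℝ → E := (Icc 0 (1 - h)).indicator (diffQuot h u)

theorem memLp_truncDiffQuot {u : ℝ → E} (hu : MemLp u 2 volume) (h : ℝ) :
    MemLp (truncDiffQuot h u) 2 (volume.restrict (Icc 0 1)) :=
  ((((hu.comp_measurePreserving (measurePreserving_add_right volume h)).sub hu).const_smul
    h⁻¹).indicator measurableSet_Icc).restrict _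

theorem integral_norm_sq_truncDiffQuot (u : ℝ → E) {h : ℝ} (h0 : 0 < h) (h1 : h ≤ 1) :
    ∫ t in (0:ℝ)..1, ‖truncDiffQuot h u t‖ ^ 2 =
      1 / h ^ 2 * ∫ t in h..1, ‖u t - u (t - h)‖ ^ 2 := by
  have hind : ∀ t, ‖truncDiffQuot h u t‖ ^ 2
      = (Icc 0 (1 - h)).indicator (fun t => 1 / h ^ 2 * ‖u (t + h) - u t‖ ^ 2) t := fun t => by
    by_cases ht : t ∈ Icc 0 (1 - h)
    · simp [truncDiffQuot, diffQuot, ht, norm_smul, mul_pow, abs_of_pos h0]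
    · simp [truncDiffQuot, ht]
  have hIoc : Ioc (0:ℝ) 1 ∩ Icc 0 (1 - h) = Ioc 0 (1 - h) := Set.ext fun t =>
    ⟨fun ⟨⟨ht₀, _⟩, _, ht₁⟩ => ⟨ht₀, ht₁⟩, fun ⟨ht₀, ht₁⟩ => ⟨⟨ht₀, by linarith⟩, ht₀.le, ht₁⟩⟩
  have hshift := intervalIntegral.integral_comp_sub_right (a := h) (b := 1)
    (fun t => ‖u (t + h) - u t‖ ^ 2) h
  simp only [sub_add_cancel, sub_self] at hshift
  simp_rw [hind]
  rw [intervalIntegral.integral_of_le zero_le_one, setIntegral_indicator measurableSet_Icc, hIoc,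
    ← intervalIntegral.integral_of_le (by linarith), intervalIntegral.integral_const_mul, hshift]

theorem integral_truncDiffQuot [CompleteSpace E] {u : ℝ → E} (hu : Integrable u) {h x : ℝ}
    (hx0 : 0 ≤ x) (hx : x ≤ 1 - h) :
    ∫ t in (0:ℝ)..x, truncDiffQuot h u t = steklov h u x - steklov h u 0 := by
  rw [← integral_diffQuot h hu]
  refine intervalIntegral.integral_congr fun t ht => indicator_of_mem ?_ _
  rw [uIcc_of_le hx0] at ht
  exact ⟨ht.1, ht.2.trans hx⟩

end UnitInterval

theorem tendsto_eLpNorm_one_indicator_sub {E ι : Type*} [NormedAddCommGroup E] {l : Filter ι}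
    {f : ℝ → E}
    {fn : ι → ℝ → E} (hf : MemLp f 2 (volume.restrict (Icc (0:ℝ) 1)))
    (hfn : ∀ n, MemLp (fn n) 2 (volume.restrict (Icc (0:ℝ) 1)))
    (hconv : Tendsto (fun n => ∫ t in (0:ℝ)..1, ‖fn n t - f t‖ ^ 2) l (𝓝 0)) :
    Tendsto (fun n => eLpNorm ((Icc 0 1).indicator (fn n) - (Icc 0 1).indicator f) 1 volume) l
      (𝓝 0) := by
  have : IsProbabilityMeasure (volume.restrict (Icc (0:ℝ) 1)) := ⟨by simp⟩
  have hle : ∀ n, eLpNorm ((Icc 0 1).indicator (fn n) - (Icc 0 1).indicator f) 1 volume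
      ≤ ENNReal.ofReal √(∫ t in (0:ℝ)..1, ‖fn n t - f t‖ ^ 2) := fun n => by
    rw [← indicator_sub', eLpNorm_indicator_eq_eLpNorm_restrict measurableSet_Icc]
    refine (eLpNorm_le_eLpNorm_of_exponent_le one_le_two ((hfn n).sub hf).1).trans_eq ?_
    rw [((hfn n).sub hf).eLpNorm_eq_integral_rpow_norm two_ne_zero ENNReal.ofNat_ne_top,
      integral_Icc_eq_integral_Ioc, ← intervalIntegral.integral_of_le zero_le_one]
    simp [Real.sqrt_eq_rpow]
  refine tendsto_of_tendsto_of_tendsto_of_le_of_le tendsto_const_nhds ?_ (fun _ => bot_le) hle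
  simpa using ENNReal.tendsto_ofReal hconv.sqrt

theorem L2.intervalIntegrable_Icc {E : Type*} [NormedAddCommGroup E]
    (F : Lp E 2 (volume.restrict (Icc (0:ℝ) 1))) {a b : ℝ}
    (ha : a ∈ Icc (0:ℝ) 1) (hb : b ∈ Icc (0:ℝ) 1) : IntervalIntegrable F volume a b :=
  (IntegrableOn.mono_set ((Lp.memLp F).integrable one_le_two)
    (uIcc_subset_Icc ha hb)).intervalIntegrable

section UnitIntervalL2

variable {E : Type*} [NormedAddCommGroup E] [InnerProductSpace ℝ E]

theorem L2.norm_sq_eq_intervalIntegral (F : Lp E 2 (volume.restrict (Icc (0:ℝ) 1))) :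
    ‖F‖ ^ 2 = ∫ t in (0:ℝ)..1, ‖F t‖ ^ 2 := by
  rw [L2.norm_sq_eq_integral_norm_sq, integral_Icc_eq_integral_Ioc,
    ← intervalIntegral.integral_of_le zero_le_one]

theorem norm_sq_toLp_truncDiffQuot_indicator {f : ℝ → E}
    (hf : MemLp ((Icc 0 1).indicator f) 2 volume) {h : ℝ} (h0 : 0 < h) (h1 : h ≤ 1) :
    ‖(memLp_truncDiffQuot hf h).toLp‖ ^ 2 = 1 / h ^ 2 * ∫ t in h..1, ‖f t - f (t - h)‖ ^ 2 := by
  rw [L2.norm_sq_eq_integral_norm_sq,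
    integral_congr_ae ((memLp_truncDiffQuot hf h).coeFn_toLp.mono fun t ht => by rw [ht]),
    integral_Icc_eq_integral_Ioc, ← intervalIntegral.integral_of_le zero_le_one,
    integral_norm_sq_truncDiffQuot _ h0 h1]
  congr 1
  refine intervalIntegral.integral_congr fun t ht => ?_
  rw [uIcc_of_le h1] at ht
  simp only [indicator_of_mem (show t ∈ Icc (0:ℝ) 1 from ⟨by linarith [ht.1], ht.2⟩),
    indicator_of_mem (show t - h ∈ Icc (0:ℝ) 1 from ⟨by linarith [ht.1], by linarith [ht.2]⟩)]

theorem tendsto_intervalIntegral_of_tendsto_inner [FiniteDimensional ℝ E] {ι : Type*}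
    {l : Filter ι} {g : ι → Lp E 2 (volume.restrict (Icc (0:ℝ) 1))}
    {G : Lp E 2 (volume.restrict (Icc (0:ℝ) 1))}
    (hgG : ∀ w, Tendsto (fun k => ⟪g k, w⟫_ℝ) l (𝓝 ⟪G, w⟫_ℝ)) {x : ℝ} (hx : x ∈ Icc (0:ℝ) 1) :
    Tendsto (fun k => ∫ t in (0:ℝ)..x, g k t) l (𝓝 (∫ t in (0:ℝ)..x, G t)) := by
  have hrestrict :
      (volume.restrict (Icc (0:ℝ) 1)).restrict (Ioc 0 x) = volume.restrict (Ioc 0 x) := by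
    rw [Measure.restrict_restrict measurableSet_Ioc,
      inter_eq_self_of_subset_left (Ioc_subset_Icc_self.trans (Icc_subset_Icc le_rfl hx.2))]
  simpa only [hrestrict, ← intervalIntegral.integral_of_le hx.1] using
    tendsto_setIntegral_of_tendsto_inner hgG (s := Ioc 0 x) measurableSet_Ioc (measure_ne_top _ _)

theorem exists_ae_eq_const_add_integral_of_tendsto_inner [FiniteDimensional ℝ E]
    {u : ℕ → ℝ → E} {v : ℝ → E} {h : ℕ → ℝ} {g : ℕ → Lp E 2 (volume.restrict (Icc (0:ℝ) 1))}
    {G : Lp E 2 (volume.restrict (Icc (0:ℝ) 1))}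
    (hu : ∀ k, Integrable (u k)) (hv : Integrable v)
    (huv : Tendsto (fun k => eLpNorm (u k - v) 1 volume) atTop (𝓝 0))
    (hh : Tendsto h atTop (𝓝[>] 0))
    (hg : ∀ k, g k =ᵐ[volume.restrict (Icc (0:ℝ) 1)] truncDiffQuot (h k) (u k))
    (hgG : ∀ w, Tendsto (fun k => ⟪g k, w⟫_ℝ) atTop (𝓝 ⟪G, w⟫_ℝ)) :
    ∃ c, ∀ᵐ x, x ∈ Icc (0:ℝ) 1 → v x = c + ∫ t in (0:ℝ)..x, G t := by
  obtain ⟨ψ, hψ, hS⟩ := exists_seq_ae_tendsto_steklov hu hv huv hh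
  have hhψ := tendsto_nhds_of_tendsto_nhdsWithin (hh.comp hψ.tendsto_atTop)
  have hH : ∀ᵐ x, x ∈ Icc (0:ℝ) 1 → Tendsto
      (fun k => steklov (h (ψ k)) (u (ψ k)) x - steklov (h (ψ k)) (u (ψ k)) 0) atTop
      (𝓝 (∫ t in (0:ℝ)..x, G t)) := by
    filter_upwards [compl_mem_ae_iff.2 (measure_singleton (1:ℝ))] with x hx_ne hx
    have hx1 : x < 1 := lt_of_le_of_ne hx.2 hx_ne
    refine ((tendsto_intervalIntegral_of_tendsto_inner hgG hx).comp hψ.tendsto_atTop).congr' ?_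
    filter_upwards [hhψ.eventually (eventually_le_nhds (sub_pos.2 hx1))] with k hk
    have hgk : ∀ᵐ t, t ∈ uIoc (0:ℝ) x → g (ψ k) t = truncDiffQuot (h (ψ k)) (u (ψ k)) t := by
      filter_upwards [ae_imp_of_ae_restrict (hg (ψ k))] with t ht ht'
      exact ht (Ioc_subset_Icc_self.trans (Icc_subset_Icc le_rfl hx.2) ((uIoc_of_le hx.1) ▸ ht'))
    rw [Function.comp_apply, intervalIntegral.integral_congr_ae hgk,
      integral_truncDiffQuot (hu _) hx.1 (by rw [Function.comp_apply] at hk; linarith)]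
  exact exists_ae_eq_const_add_of_tendsto_sub (by simp) hS hH

end UnitIntervalL2

/-- Finite-difference characterisation of `H¹` along a sequence: if `fₙ → f` in
`L²([0,1])` and the rescaled finite differences of `fₙ` have finite liminf, then `f`
has an `H¹` representative `F` with weak (`L²`) derivative `g'`, and
`liminf εₙ⁻² ∫_{εₙ}^1 ‖fₙ(t) - fₙ(t-εₙ)‖² ≥ ∫₀¹ ‖g'‖²`. -/
theorem finite_difference_H1_liminf
    (κ : ℕ) (f : ℝ → EuclideanSpace ℝ (Fin κ)) (fn : ℕ → ℝ → EuclideanSpace ℝ (Fin κ))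
    (hfL2 : MemLp f 2 (volume.restrict (Icc (0:ℝ) 1)))
    (hfnL2 : ∀ n, MemLp (fn n) 2 (volume.restrict (Icc (0:ℝ) 1)))
    (hconv : Tendsto (fun n => ∫ t in (0:ℝ)..1, ‖fn n t - f t‖ ^ 2) atTop (nhds 0))
    (ε : ℕ → ℝ) (hεpos : ∀ n, 0 < ε n) (hε : Tendsto ε atTop (nhds 0))
    (hfin : ∃ A : ℝ, ∃ᶠ n in atTop,
      (1 / (ε n) ^ 2) * ∫ t in (ε n)..1, ‖fn n t - fn n (t - ε n)‖ ^ 2 ≤ A) :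
    ∃ (F g' : ℝ → EuclideanSpace ℝ (Fin κ)),
      (∀ᵐ t ∂MeasureTheory.volume, t ∈ Icc (0:ℝ) 1 → f t = F t) ∧
      MemLp g' 2 (volume.restrict (Icc (0:ℝ) 1)) ∧
      (∀ s ∈ Icc (0:ℝ) 1, ∀ t ∈ Icc (0:ℝ) 1, F t - F s = ∫ u in s..t, g' u) ∧
      (∫ t in (0:ℝ)..1, ‖g' t‖ ^ 2) ≤
        Filter.liminf (fun n =>
          (1 / (ε n) ^ 2) * ∫ t in (ε n)..1, ‖fn n t - fn n (t - ε n)‖ ^ 2) atTop := by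
  have hu n := (memLp_indicator_iff_restrict measurableSet_Icc).2 (hfnL2 n)
  let g n := (memLp_truncDiffQuot (hu n) (ε n)).toLp
  have hgD : ∀ᶠ n in atTop, ‖g n‖ ^ 2 =
      (1 / (ε n) ^ 2) * ∫ t in (ε n)..1, ‖fn n t - fn n (t - ε n)‖ ^ 2 := by
    filter_upwards [hε.eventually (eventually_le_nhds one_pos)] with n hn
    exact norm_sq_toLp_truncDiffQuot_indicator (hu n) (hεpos n) hn
  obtain ⟨A, hA⟩ := hfin
  -- lets instance search see that `L²(0,1)` is second countable, hence separable
  have : Fact ((2 : ℝ≥0∞) ≠ ∞) := ⟨ENNReal.ofNat_ne_top⟩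
  obtain ⟨φ, hφ, G, hgG, hGL⟩ := exists_seq_tendsto_inner_norm_sq_le_liminf (g := g)
    ((hA.and_eventually hgD).mono fun n ⟨hn, hgn⟩ => hgn ▸ hn)
  obtain ⟨c, hc⟩ := exists_ae_eq_const_add_integral_of_tendsto_inner
    (fun k => (integrable_indicator_iff measurableSet_Icc).2 ((hfnL2 (φ k)).integrable one_le_two))
    ((integrable_indicator_iff measurableSet_Icc).2 (hfL2.integrable one_le_two))
    ((tendsto_eLpNorm_one_indicator_sub hfL2 hfnL2 hconv).comp hφ)
    (tendsto_nhdsWithin_iff.2 ⟨hε.comp hφ, .of_forall fun _ => hεpos _⟩)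
    (fun k => (memLp_truncDiffQuot (hu _) _).coeFn_toLp) hgG
  refine ⟨fun x => c + ∫ t in (0:ℝ)..x, G t, G, ?_, Lp.memLp G, fun s hs t ht => ?_, ?_⟩
  · filter_upwards [hc] with x hx hxI
    rw [← hx hxI, indicator_of_mem hxI]
  · rw [add_sub_add_left_eq_sub, intervalIntegral.integral_interval_sub_left
      (L2.intervalIntegrable_Icc G (left_mem_Icc.2 zero_le_one) ht)
      (L2.intervalIntegrable_Icc G (left_mem_Icc.2 zero_le_one) hs)]
  · rwa [← L2.norm_sq_eq_intervalIntegral, ← liminf_congr hgD]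
end
end

section
/- Let $K \in H^1([0,1]; \mathbb{R}^{d\times d})$ and for each $n$ define $K_i^{(n)} = n\int_{i/n}^{(i+1)/n} K(t)\,dt$, $i = 0, \dots, n-1$. Then for every $\varepsilon > 0$, $\limsup_{n\to\infty}\left(n\sum_{i=1}^{n-1}\|K_i^{(n)} - K_{i-1}^{(n)}\|^2 + \tau_1\|K_0^{(n)}\|^2\right) \leq (1+\varepsilon)\left(\int_0^1\|\nabla K(t)\|^2 dt + \tau_1\|K(0)\|^2\right)$; consequently $\limsup_{n\to\infty} R_n^{(1)}(K^{(n)}) \leq R_\infty^{(1)}(K)$, where $R_n^{(1)}(K^{(n)}) = n\sum_{i=1}^{n-1}\|K_i^{(n)} - K_{i-1}^{(n)}\|^2 + \tau_1\|K_0^{(n)}\|^2$ and $R_\infty^{(1)}(K) = \|\nabla K\|_{L^2}^2 + \tau_1\|K(0)\|^2$, with $\tau_1 > 0$. -/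
/-!
The local averages are compared with the shifted differences `K (s + 1/n) - K s`:
`K_{k+1}^{(n)} - K_k^{(n)} = n ∫_{k/n}^{(k+1)/n} (K (s + 1/n) - K s) ds`. Two applications of
Jensen's inequality, one for this average and one for `K (s + h) - K s = ∫_s^{s+h} K'`, give
`n ‖K_{k+1}^{(n)} - K_k^{(n)}‖² ≤ n ∫_{k/n}^{(k+1)/n} (Φ (s + 1/n) - Φ s) ds` with
`Φ x = ∫_0^x ‖K'‖²`. Summing over `k` and using that `Φ` is monotone bounds the difference part
of the regulariser by `∫_0^1 ‖K'‖²` for every `n`. The same Jensen estimate makes `K`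
`1/2`-Hölder at `0`, so `K_0^{(n)} → K 0` and the boundary term converges.
-/

open Set Filter MeasureTheory Topology Interval intervalIntegral

/-- The local average `K_i^{(n)} = n ∫_{i/n}^{(i+1)/n} K`. -/
noncomputable def localAvg {d : ℕ} (K : ℝ → EuclideanSpace ℝ (Fin d × Fin d)) (n i : ℕ) :
    EuclideanSpace ℝ (Fin d × Fin d) :=
  (n : ℝ) • ∫ t in ((i : ℝ) / n)..(((i : ℝ) + 1) / n), K t

lemma IntervalIntegrable.mono_Icc {E : Type*} [NormedAddCommGroup E] {f : ℝ → E}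
    {μ : Measure ℝ} {a b c d : ℝ} (hf : IntervalIntegrable f μ a b)
    (hac : a ≤ c) (hcd : c ≤ d) (hdb : d ≤ b) : IntervalIntegrable f μ c d :=
  hf.mono_set <| by
    rw [uIcc_of_le hcd, uIcc_of_le (hac.trans (hcd.trans hdb))]
    exact Icc_subset_Icc hac hdb

lemma sq_intervalIntegral_le {g : ℝ → ℝ} {a b : ℝ} (hab : a ≤ b)
    (hg : IntervalIntegrable g volume a b)
    (hg2 : IntervalIntegrable (fun x => g x ^ 2) volume a b) :
    (∫ x in a..b, g x) ^ 2 ≤ (b - a) * ∫ x in a..b, g x ^ 2 := by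
  rcases hab.eq_or_lt with rfl | hlt
  · simp
  set c := (∫ x in a..b, g x) / (b - a)
  -- the variance `∫ (g - c)²` of `g` about its mean `c` is nonnegative
  have hvar : 0 ≤ ∫ x in a..b, (g x ^ 2 - 2 * c * g x + c ^ 2) :=
    integral_nonneg hab fun x _ => by nlinarith [sq_nonneg (g x - c)]
  rw [integral_add (hg2.sub (hg.const_mul _)) intervalIntegrable_const,
    integral_sub hg2 (hg.const_mul _), intervalIntegral.integral_const_mul,
    intervalIntegral.integral_const, smul_eq_mul] at hvar
  have hc : c * (b - a) = ∫ x in a..b, g x := div_mul_cancel₀ _ (sub_ne_zero.mpr hlt.ne')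
  nlinarith

section Monotone

variable {Φ : ℝ → ℝ} {a b : ℝ}

lemma MonotoneOn.intervalIntegrable_mono_Icc {c d : ℝ} (hΦ : MonotoneOn Φ (Icc a b))
    (hac : a ≤ c) (hcd : c ≤ d) (hdb : d ≤ b) : IntervalIntegrable Φ volume c d :=
  (hΦ.mono (by rw [uIcc_of_le hcd]; exact Icc_subset_Icc hac hdb)).intervalIntegrable

lemma MonotoneOn.intervalIntegrable_sub_comp_add {h : ℝ} (hΦ : MonotoneOn Φ (Icc a (b + h)))
    (hab : a ≤ b) (hh : 0 ≤ h) :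
    IntervalIntegrable (fun s => Φ (s + h) - Φ s) volume a b := by
  refine IntervalIntegrable.sub ?_ (hΦ.intervalIntegrable_mono_Icc le_rfl hab (by linarith))
  simpa using (hΦ.intervalIntegrable_mono_Icc (c := a + h) (d := b + h) (by linarith)
    (by linarith) le_rfl).comp_add_right h

lemma integral_sub_comp_add_le_of_monotoneOn {h : ℝ} (hΦ : MonotoneOn Φ (Icc a b))
    (hh : 0 ≤ h) (hhb : a + h ≤ b) :
    ∫ s in a..b - h, (Φ (s + h) - Φ s) ≤ h * (Φ b - Φ a) := by
  have hint : ∀ c d, a ≤ c → c ≤ d → d ≤ b → IntervalIntegrable Φ volume c d :=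
    fun c d => hΦ.intervalIntegrable_mono_Icc
  have htop : ∫ s in b - h..b, Φ s ≤ ∫ _ in b - h..b, Φ b :=
    integral_mono_on (by linarith) (hint _ _ (by linarith) (by linarith) le_rfl)
      intervalIntegrable_const
      fun s hs => hΦ ⟨by linarith [hs.1], hs.2⟩ ⟨by linarith, le_rfl⟩ hs.2
  have hbot : ∫ _ in a..a + h, Φ a ≤ ∫ s in a..a + h, Φ s :=
    integral_mono_on (by linarith) intervalIntegrable_const (hint _ _ le_rfl (by linarith) hhb)
      fun s hs => hΦ ⟨le_rfl, by linarith⟩ ⟨hs.1, by linarith [hs.2]⟩ hs.1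
  have hsplit := integral_add_adjacent_intervals (hint a (a + h) le_rfl (by linarith) hhb)
    (hint (a + h) b (by linarith) hhb le_rfl)
  have hsplit' := integral_add_adjacent_intervals
    (hint a (b - h) le_rfl (by linarith) (by linarith))
    (hint (b - h) b (by linarith) (by linarith) le_rfl)
  have hshift : IntervalIntegrable (fun s => Φ (s + h)) volume a (b - h) := by
    simpa using (hint (a + h) b (by linarith) hhb le_rfl).comp_add_right h
  -- the integral telescopes to `∫_{b-h}^b Φ - ∫_a^{a+h} Φ`
  rw [integral_sub hshift (hint a (b - h) le_rfl (by linarith) (by linarith)),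
    integral_comp_add_right, sub_add_cancel]
  simp only [intervalIntegral.integral_const, smul_eq_mul, sub_sub_cancel,
    add_sub_cancel_left] at htop hbot
  linarith

lemma monotoneOn_integral_of_nonneg {f : ℝ → ℝ} (hf : IntervalIntegrable f volume a b)
    (hf0 : ∀ x, 0 ≤ f x) : MonotoneOn (fun x => ∫ u in a..x, f u) (Icc a b) :=
  fun _ hx _ hy hxy => integral_mono_interval le_rfl hx.1 hxy (ae_of_all _ hf0)
    (hf.mono_Icc le_rfl (hx.1.trans hxy) hy.2)

end Monotone

lemma limsup_add_le_of_tendsto {ι : Type*} {l : Filter ι} [l.NeBot] {u v : ι → ℝ} {A b : ℝ}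
    (hu0 : ∀ i, 0 ≤ u i) (hu : ∀ᶠ i in l, u i ≤ A) (hv : Tendsto v l (𝓝 b)) :
    limsup (fun i => u i + v i) l ≤ A + b := by
  have hw : Tendsto (fun i => A + v i) l (𝓝 (A + b)) := hv.const_add A
  have hcobdd : IsCoboundedUnder (· ≤ ·) l (fun i => u i + v i) :=
    (hv.isBoundedUnder_ge.mono_ge (Eventually.of_forall fun i => by
      linarith [hu0 i])).isCoboundedUnder_le
  calc limsup (fun i => u i + v i) l ≤ limsup (fun i => A + v i) l :=
        limsup_le_limsup (hu.mono fun i hi => by linarith) hcobdd hw.isBoundedUnder_le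
    _ = A + b := hw.limsup_eq

section Jensen

variable {E : Type*} [NormedAddCommGroup E] [NormedSpace ℝ E]

lemma norm_intervalIntegral_sq_le {f : ℝ → E} {a b : ℝ} (hab : a ≤ b)
    (hf : IntervalIntegrable f volume a b)
    (hf2 : IntervalIntegrable (fun x => ‖f x‖ ^ 2) volume a b) :
    ‖∫ x in a..b, f x‖ ^ 2 ≤ (b - a) * ∫ x in a..b, ‖f x‖ ^ 2 :=
  (pow_le_pow_left₀ (norm_nonneg _) (intervalIntegral.norm_integral_le_integral_norm hab) 2).trans
    (sq_intervalIntegral_le hab hf.norm hf2)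

lemma integral_sub_sub_comp_add_left {f : ℝ → E} {a h : ℝ} (hh : 0 ≤ h)
    (hf : IntervalIntegrable f volume a (a + 2 * h)) :
    (∫ x in a + h..a + 2 * h, f x) - ∫ x in a..a + h, f x
      = ∫ x in a..a + h, (f (x + h) - f x) := by
  have hf₁ : IntervalIntegrable f volume a (a + h) :=
    hf.mono_Icc le_rfl (by linarith) (by linarith)
  have hf₂ : IntervalIntegrable f volume (a + h) (a + 2 * h) :=
    hf.mono_Icc (by linarith) (by linarith) le_rfl
  have hf₂' : IntervalIntegrable (fun x => f (x + h)) volume a (a + h) := by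
    simpa [two_mul, ← add_assoc] using hf₂.comp_add_right h
  rw [integral_sub hf₂' hf₁, integral_comp_add_right, add_assoc, ← two_mul]

lemma norm_integral_sub_integral_sq_le {K : ℝ → E} {Φ : ℝ → ℝ} {a h : ℝ} (hh : 0 ≤ h)
    (hK : ContinuousOn K (Icc a (a + 2 * h))) (hΦ : MonotoneOn Φ (Icc a (a + 2 * h)))
    (hincr : ∀ s ∈ Icc a (a + h), ‖K (s + h) - K s‖ ^ 2 ≤ h * (Φ (s + h) - Φ s)) :
    ‖(∫ x in a + h..a + 2 * h, K x) - ∫ x in a..a + h, K x‖ ^ 2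
      ≤ h ^ 2 * ∫ s in a..a + h, (Φ (s + h) - Φ s) := by
  have hD : ContinuousOn (fun s => K (s + h) - K s) (Icc a (a + h)) :=
    (hK.comp (continuous_add_const h).continuousOn
      fun s hs => ⟨by linarith [hs.1], by linarith [hs.2]⟩).sub
      (hK.mono (Icc_subset_Icc le_rfl (by linarith)))
  have hD2 : IntervalIntegrable (fun s => ‖K (s + h) - K s‖ ^ 2) volume a (a + h) :=
    (hD.norm.pow 2).intervalIntegrable_of_Icc (by linarith)
  have hΦi : IntervalIntegrable (fun s => Φ (s + h) - Φ s) volume a (a + h) :=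
    (hΦ.mono (Icc_subset_Icc le_rfl (by linarith))).intervalIntegrable_sub_comp_add
      (by linarith) hh
  rw [integral_sub_sub_comp_add_left hh (hK.intervalIntegrable_of_Icc (by linarith))]
  calc _ ≤ (a + h - a) * ∫ s in a..a + h, ‖K (s + h) - K s‖ ^ 2 :=
        norm_intervalIntegral_sq_le (by linarith) (hD.intervalIntegrable_of_Icc (by linarith)) hD2
    _ ≤ h * ∫ s in a..a + h, h * (Φ (s + h) - Φ s) := by
        rw [add_sub_cancel_left]
        exact mul_le_mul_of_nonneg_left
          (integral_mono_on (by linarith) hD2 (hΦi.const_mul h) hincr) hh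
    _ = _ := by rw [intervalIntegral.integral_const_mul]; ring

lemma continuousOn_of_forall_sub_eq_integral {K K' : ℝ → E} {a b : ℝ} (hab : a ≤ b)
    (hK' : IntervalIntegrable K' volume a b)
    (hFTC : ∀ t ∈ Icc a b, K t - K a = ∫ u in a..t, K' u) : ContinuousOn K (Icc a b) := by
  have hprim := continuousOn_primitive_interval' hK' left_mem_uIcc
  rw [uIcc_of_le hab] at hprim
  exact ((continuousOn_const (c := K a)).add hprim).congr fun t ht =>
    sub_eq_iff_eq_add'.mp (hFTC t ht)

lemma norm_sub_sq_le_mul_sub_integral {K K' : ℝ → E} {a b : ℝ}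
    (hK' : IntervalIntegrable K' volume a b)
    (hK'2 : IntervalIntegrable (fun t => ‖K' t‖ ^ 2) volume a b)
    (hFTC : ∀ s ∈ Icc a b, ∀ t ∈ Icc a b, K t - K s = ∫ u in s..t, K' u)
    ⦃s t : ℝ⦄ (hs : a ≤ s) (hst : s ≤ t) (ht : t ≤ b) :
    ‖K t - K s‖ ^ 2
      ≤ (t - s) * ((∫ u in a..t, ‖K' u‖ ^ 2) - ∫ u in a..s, ‖K' u‖ ^ 2) := by
  rw [integral_interval_sub_left (hK'2.mono_Icc le_rfl (hs.trans hst) ht)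
    (hK'2.mono_Icc le_rfl hs (hst.trans ht)), hFTC s ⟨hs, hst.trans ht⟩ t ⟨hs.trans hst, ht⟩]
  exact norm_intervalIntegral_sq_le hst (hK'.mono_Icc hs hst ht) (hK'2.mono_Icc hs hst ht)

end Jensen

section LocalAverage

variable {d : ℕ} {K : ℝ → EuclideanSpace ℝ (Fin d × Fin d)}

lemma localAvg_eq (K : ℝ → EuclideanSpace ℝ (Fin d × Fin d)) (n i : ℕ) :
    localAvg K n i = (n : ℝ) • ∫ t in (i : ℝ) / n..i / n + (n : ℝ)⁻¹, K t := by
  rw [localAvg, add_div, one_div]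

lemma norm_localAvg_succ_sub_sq_le {Φ : ℝ → ℝ} {n k : ℕ} (hk : k + 2 ≤ n)
    (hK : ContinuousOn K (Icc 0 1)) (hΦ : MonotoneOn Φ (Icc 0 1))
    (hincr : ∀ s ∈ Icc 0 (1 - (n : ℝ)⁻¹),
      ‖K (s + (n : ℝ)⁻¹) - K s‖ ^ 2 ≤ (n : ℝ)⁻¹ * (Φ (s + (n : ℝ)⁻¹) - Φ s)) :
    ‖localAvg K n (k + 1) - localAvg K n k‖ ^ 2
      ≤ ∫ s in (k : ℝ) / n..k / n + (n : ℝ)⁻¹, (Φ (s + (n : ℝ)⁻¹) - Φ s) := by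
  have hn : (0 : ℝ) < n := by norm_cast; omega
  set h := (n : ℝ)⁻¹
  set a := (k : ℝ) / n
  have ha : 0 ≤ a := by positivity
  have ha2h : a + 2 * h ≤ 1 := by
    rw [show a + 2 * h = ((k + 2 : ℕ) : ℝ) / n by push_cast; ring, div_le_one hn]
    exact_mod_cast hk
  have hsucc : localAvg K n (k + 1) = (n : ℝ) • ∫ t in a + h..a + 2 * h, K t := by
    rw [localAvg_eq]; congr 2 <;> push_cast <;> ring
  rw [hsucc, localAvg_eq, ← smul_sub, norm_smul, mul_pow, Real.norm_of_nonneg hn.le]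
  calc (n : ℝ) ^ 2 * ‖(∫ t in a + h..a + 2 * h, K t) - ∫ t in a..a + h, K t‖ ^ 2
      ≤ (n : ℝ) ^ 2 * (h ^ 2 * ∫ s in a..a + h, (Φ (s + h) - Φ s)) := by
        gcongr
        exact norm_integral_sub_integral_sq_le (by positivity)
          (hK.mono (Icc_subset_Icc ha ha2h)) (hΦ.mono (Icc_subset_Icc ha ha2h))
          fun s hs => hincr s ⟨by linarith [hs.1], by linarith [hs.2]⟩
    _ = _ := by rw [← mul_assoc, ← mul_pow, mul_inv_cancel₀ hn.ne', one_pow, one_mul]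

lemma mul_sum_norm_localAvg_sub_sq_le {Φ : ℝ → ℝ} {n : ℕ} (hn : 1 ≤ n)
    (hK : ContinuousOn K (Icc 0 1)) (hΦ : MonotoneOn Φ (Icc 0 1))
    (hincr : ∀ s ∈ Icc 0 (1 - (n : ℝ)⁻¹),
      ‖K (s + (n : ℝ)⁻¹) - K s‖ ^ 2 ≤ (n : ℝ)⁻¹ * (Φ (s + (n : ℝ)⁻¹) - Φ s)) :
    (n : ℝ) * ∑ i ∈ Finset.Icc 1 (n - 1), ‖localAvg K n i - localAvg K n (i - 1)‖ ^ 2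
      ≤ Φ 1 - Φ 0 := by
  have hn' : (0 : ℝ) < n := by exact_mod_cast hn
  set h := (n : ℝ)⁻¹
  have hh1 : h ≤ 1 := inv_le_one_of_one_le₀ (by exact_mod_cast hn)
  have hgint : IntervalIntegrable (fun s => Φ (s + h) - Φ s) volume 0 (1 - h) :=
    (sub_add_cancel (1 : ℝ) h ▸ hΦ).intervalIntegrable_sub_comp_add (by linarith) (by positivity)
  have hsum : ∑ k ∈ Finset.range (n - 1), ∫ s in (k : ℝ) / n..k / n + h, (Φ (s + h) - Φ s)
      = ∫ s in 0..1 - h, (Φ (s + h) - Φ s) := by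
    have hgrid : ∀ k : ℕ, (k : ℝ) / n + h = ((k + 1 : ℕ) : ℝ) / n := fun k => by push_cast; ring
    simp_rw [hgrid]
    rw [sum_integral_adjacent_intervals (a := fun k : ℕ => (k : ℝ) / n)]
    · rw [Nat.cast_zero, zero_div, Nat.cast_sub hn, Nat.cast_one, sub_div, div_self hn'.ne',
        one_div]
    · intro k hk
      have hk' : ((k + 1 : ℕ) : ℝ) ≤ n - 1 := by
        rw [← Nat.cast_pred hn]; exact_mod_cast hk
      refine hgint.mono_Icc (by positivity) (by gcongr; simp) ?_
      rw [div_le_iff₀ hn', sub_mul, inv_mul_cancel₀ hn'.ne', one_mul]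
      exact hk'
  rw [← Finset.Ico_add_one_right_eq_Icc, Finset.sum_Ico_eq_sum_range]
  simp only [Nat.sub_add_cancel hn, add_comm 1, Nat.add_sub_cancel]
  calc (n : ℝ) * ∑ k ∈ Finset.range (n - 1), ‖localAvg K n (k + 1) - localAvg K n k‖ ^ 2
      ≤ n * ∑ k ∈ Finset.range (n - 1), ∫ s in (k : ℝ) / n..k / n + h, (Φ (s + h) - Φ s) := by
        gcongr with k hk
        exact norm_localAvg_succ_sub_sq_le (by have := Finset.mem_range.mp hk; omega) hK hΦ hincr
    _ ≤ n * (h * (Φ 1 - Φ 0)) := by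
        rw [hsum]
        gcongr
        exact integral_sub_comp_add_le_of_monotoneOn hΦ (by positivity) (by linarith)
    _ = Φ 1 - Φ 0 := by rw [← mul_assoc, mul_inv_cancel₀ hn'.ne', one_mul]

lemma norm_localAvg_zero_sub_le {C : ℝ} {n : ℕ} (hn : 1 ≤ n) (hK : ContinuousOn K (Icc 0 1))
    (hHolder : ∀ t ∈ Icc (0 : ℝ) 1, ‖K t - K 0‖ ^ 2 ≤ t * C) :
    ‖localAvg K n 0 - K 0‖ ≤ √(C / n) := by
  have hn' : (0 : ℝ) < n := by exact_mod_cast hn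
  set h := (n : ℝ)⁻¹
  have hh1 : h ≤ 1 := inv_le_one_of_one_le₀ (by exact_mod_cast hn)
  have hC : 0 ≤ C := by simpa using (sq_nonneg _).trans (hHolder 1 (right_mem_Icc.2 zero_le_one))
  have hKi : IntervalIntegrable K volume 0 h :=
    (hK.mono (Icc_subset_Icc le_rfl hh1)).intervalIntegrable_of_Icc (by positivity)
  have hbound : ∀ t ∈ Ι 0 h, ‖K t - K 0‖ ≤ √(C / n) := fun t ht => by
    rw [uIoc_of_le (by positivity)] at ht
    refine Real.le_sqrt_of_sq_le ((hHolder t ⟨ht.1.le, ht.2.trans hh1⟩).trans ?_)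
    rw [div_eq_inv_mul]
    exact mul_le_mul_of_nonneg_right ht.2 hC
  have havg : localAvg K n 0 - K 0 = (n : ℝ) • ∫ t in 0..h, (K t - K 0) := by
    rw [localAvg_eq, Nat.cast_zero, zero_div, zero_add, integral_sub hKi intervalIntegrable_const,
      intervalIntegral.integral_const, smul_sub, smul_smul, sub_zero, mul_inv_cancel₀ hn'.ne',
      one_smul]
  calc ‖localAvg K n 0 - K 0‖ ≤ n * (√(C / n) * |h - 0|) := by
        rw [havg, norm_smul, Real.norm_of_nonneg hn'.le]
        exact mul_le_mul_of_nonneg_left (norm_integral_le_of_norm_le_const hbound) hn'.le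
    _ = √(C / n) := by
        rw [sub_zero, abs_of_pos (inv_pos.2 hn'), mul_left_comm, mul_inv_cancel₀ hn'.ne', mul_one]

lemma tendsto_localAvg_zero {C : ℝ} (hK : ContinuousOn K (Icc 0 1))
    (hHolder : ∀ t ∈ Icc (0 : ℝ) 1, ‖K t - K 0‖ ^ 2 ≤ t * C) :
    Tendsto (fun n => localAvg K n 0) atTop (𝓝 (K 0)) := by
  rw [tendsto_iff_norm_sub_tendsto_zero]
  refine squeeze_zero' (Eventually.of_forall fun _ => norm_nonneg _)
    ((eventually_ge_atTop 1).mono fun n hn => norm_localAvg_zero_sub_le hn hK hHolder) ?_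
  simpa using (tendsto_const_div_atTop_nhds_zero_nat C).sqrt

end LocalAverage

/-- The limsup (recovery sequence) inequality for the non-parametric ResNet
regulariser: for `K ∈ H¹([0,1])` with weak derivative `K'`,
`limsup_n R_n^{(1)}(K^{(n)}) ≤ R_∞^{(1)}(K)` where `K^{(n)}` are the local averages. -/
theorem regulariser_limsup_inequality
    (d : ℕ) (τ₁ : ℝ) (hτ₁ : 0 < τ₁)
    (K K' : ℝ → EuclideanSpace ℝ (Fin d × Fin d))
    (hK'int : IntervalIntegrable K' MeasureTheory.volume 0 1)
    (hK'L2 : IntervalIntegrable (fun t => ‖K' t‖ ^ 2) MeasureTheory.volume 0 1)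
    (hFTC : ∀ s ∈ Icc (0:ℝ) 1, ∀ t ∈ Icc (0:ℝ) 1, K t - K s = ∫ u in s..t, K' u) :
    (∀ ε > 0,
      Filter.limsup (fun n : ℕ =>
          (n : ℝ) * ∑ i ∈ Finset.Icc 1 (n - 1), ‖localAvg K n i - localAvg K n (i - 1)‖ ^ 2
            + τ₁ * ‖localAvg K n 0‖ ^ 2) atTop
        ≤ (1 + ε) * ((∫ t in (0:ℝ)..1, ‖K' t‖ ^ 2) + τ₁ * ‖K 0‖ ^ 2)) ∧
    Filter.limsup (fun n : ℕ =>
        (n : ℝ) * ∑ i ∈ Finset.Icc 1 (n - 1), ‖localAvg K n i - localAvg K n (i - 1)‖ ^ 2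
          + τ₁ * ‖localAvg K n 0‖ ^ 2) atTop
      ≤ (∫ t in (0:ℝ)..1, ‖K' t‖ ^ 2) + τ₁ * ‖K 0‖ ^ 2 := by
  have hK : ContinuousOn K (Icc 0 1) := continuousOn_of_forall_sub_eq_integral zero_le_one
    hK'int fun t ht => hFTC 0 (left_mem_Icc.2 zero_le_one) t ht
  set Φ := fun x => ∫ u in (0 : ℝ)..x, ‖K' u‖ ^ 2 with hΦ_def
  have hΦ : MonotoneOn Φ (Icc 0 1) := monotoneOn_integral_of_nonneg hK'L2 fun _ => sq_nonneg _
  have hincr := norm_sub_sq_le_mul_sub_integral hK'int hK'L2 hFTC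
  have hbulk : ∀ᶠ n : ℕ in atTop, (n : ℝ) * ∑ i ∈ Finset.Icc 1 (n - 1),
      ‖localAvg K n i - localAvg K n (i - 1)‖ ^ 2 ≤ Φ 1 - Φ 0 := by
    filter_upwards [eventually_ge_atTop 1] with n hn
    refine mul_sum_norm_localAvg_sub_sq_le hn hK hΦ fun s hs => ?_
    have hh : (0 : ℝ) ≤ (n : ℝ)⁻¹ := by positivity
    simpa using hincr hs.1 (le_add_of_nonneg_right hh) (by linarith [hs.2])
  have hHolder : ∀ t ∈ Icc (0 : ℝ) 1, ‖K t - K 0‖ ^ 2 ≤ t * Φ 1 := fun t ht =>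
    (hincr le_rfl ht.1 ht.2).trans <| by
      simpa using mul_le_mul_of_nonneg_left (hΦ ht (right_mem_Icc.2 zero_le_one) ht.2) ht.1
  have hmain := limsup_add_le_of_tendsto (fun n => by positivity) hbulk
    (((tendsto_localAvg_zero hK hHolder).norm.pow 2).const_mul τ₁)
  simp only [hΦ_def, integral_same, sub_zero] at hmain
  have hE : 0 ≤ ∫ t in (0:ℝ)..1, ‖K' t‖ ^ 2 := integral_nonneg zero_le_one fun _ _ => sq_nonneg _
  exact ⟨fun ε hε => hmain.trans (le_mul_of_one_le_left (by positivity) (by linarith)), hmain⟩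
end

section
/- For each $n \in \mathbb{N}$ let $f_n : \{0, 1/n, \dots, (n-1)/n\} \to \mathbb{R}^\kappa$ satisfy $\sup_n \left(\|f_n(0)\|^2 + n\sum_{j=1}^{n-1}\|f_n(j/n) - f_n((j-1)/n)\|^2\right) < \infty$. Then there exists a subsequence $(n_m)$ and a function $f \in C^{0,\gamma}([0,1]; \mathbb{R}^\kappa)$ for every $\gamma < 1/2$ such that $\max_{0\leq i \leq n_m - 1}\|f_{n_m}(i/n_m) - f(i/n_m)\| \to 0$ as $m \to \infty$. -/
open Set Finset Filter Topology

set_option maxHeartbeats 2000000 in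
/-- Discrete compactness: discrete functions with uniformly bounded discrete `H¹`
norm have a subsequence converging uniformly at grid points to a function that is
`γ`-Hölder continuous for every `γ < 1/2`. -/
theorem discrete_H1_compactness
    (κ : ℕ) (f : ℕ → ℕ → EuclideanSpace ℝ (Fin κ))
    (hbdd : ∃ C : ℝ, ∀ n : ℕ,
      ‖f n 0‖ ^ 2 + (n : ℝ) * ∑ j ∈ Finset.Icc 1 (n - 1), ‖f n j - f n (j - 1)‖ ^ 2 ≤ C) :
    ∃ (φ : ℕ → ℕ) (F : ℝ → EuclideanSpace ℝ (Fin κ)),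
      StrictMono φ ∧
      (∀ γ : ℝ, 0 < γ → γ < 1 / 2 → ∃ Cγ : ℝ,
        ∀ s ∈ Icc (0:ℝ) 1, ∀ t ∈ Icc (0:ℝ) 1, ‖F s - F t‖ ≤ Cγ * |s - t| ^ γ) ∧
      (∀ ε > 0, ∃ M : ℕ, ∀ m ≥ M, ∀ i < φ m,
        ‖f (φ m) i - F ((i : ℝ) / (φ m : ℝ))‖ < ε) := by
  classical
  obtain ⟨C, hC⟩ := hbdd
  have hC0 : ∀ n, ‖f n 0‖ ^ 2 ≤ C := by
    intro n
    have h1 : (0:ℝ) ≤ (n : ℝ) * ∑ j ∈ Finset.Icc 1 (n - 1), ‖f n j - f n (j - 1)‖ ^ 2 := by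
      positivity
    linarith [hC n]
  have hCnn : (0:ℝ) ≤ C := le_trans (by positivity) (hC0 0)
  have hsum : ∀ n : ℕ, (n:ℝ) * ∑ j ∈ Finset.Icc 1 (n - 1), ‖f n j - f n (j - 1)‖ ^ 2 ≤ C := by
    intro n
    have := hC n
    nlinarith [sq_nonneg ‖f n 0‖]
  -- Discrete Hölder estimate
  have lemD : ∀ n : ℕ, 1 ≤ n → ∀ i j : ℕ, i ≤ j → j ≤ n - 1 →
      ‖f n j - f n i‖ ^ 2 ≤ C * (((j : ℝ) - i) / n) := by
    intro n hn i j hij hjn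
    have hnpos : (0:ℝ) < n := by exact_mod_cast hn
    have htel : f n j - f n i
        = ∑ k ∈ Finset.range (j - i), (f n (i + (k + 1)) - f n (i + k)) := by
      rw [Finset.sum_range_sub (fun k => f n (i + k)) (j - i), Nat.add_sub_cancel' hij]
      simp
    have hnorm : ‖f n j - f n i‖
        ≤ ∑ k ∈ Finset.range (j - i), ‖f n (i + (k + 1)) - f n (i + k)‖ := by
      rw [htel]; exact norm_sum_le _ _
    have hsq : ‖f n j - f n i‖ ^ 2
        ≤ ((j - i : ℕ) : ℝ) * ∑ k ∈ Finset.range (j - i), ‖f n (i + (k + 1)) - f n (i + k)‖ ^ 2 := by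
      calc ‖f n j - f n i‖ ^ 2
          ≤ (∑ k ∈ Finset.range (j - i), ‖f n (i + (k + 1)) - f n (i + k)‖) ^ 2 := by
            apply pow_le_pow_left₀ (norm_nonneg _) hnorm
        _ ≤ ((Finset.range (j - i)).card : ℝ)
              * ∑ k ∈ Finset.range (j - i), ‖f n (i + (k + 1)) - f n (i + k)‖ ^ 2 :=
            sq_sum_le_card_mul_sum_sq
        _ = _ := by rw [Finset.card_range]
    have hre : ∑ k ∈ Finset.range (j - i), ‖f n (i + (k + 1)) - f n (i + k)‖ ^ 2
        = ∑ k ∈ Finset.Icc (i + 1) j, ‖f n k - f n (k - 1)‖ ^ 2 := by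
      rw [← Finset.Ico_add_one_right_eq_Icc, Finset.sum_Ico_eq_sum_range]
      apply Finset.sum_congr (by congr 1; omega)
      intro k _
      rw [show i + 1 + k = i + (k + 1) from by omega, show i + (k + 1) - 1 = i + k from by omega]
    have hsub : ∑ k ∈ Finset.Icc (i + 1) j, ‖f n k - f n (k - 1)‖ ^ 2
        ≤ ∑ k ∈ Finset.Icc 1 (n - 1), ‖f n k - f n (k - 1)‖ ^ 2 := by
      apply Finset.sum_le_sum_of_subset_of_nonneg
      · exact Finset.Icc_subset_Icc (by omega) hjn
      · intro k _ _; positivity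
    have hfull : ∑ k ∈ Finset.Icc 1 (n - 1), ‖f n k - f n (k - 1)‖ ^ 2 ≤ C / n := by
      rw [le_div_iff₀ hnpos]
      calc (∑ k ∈ Finset.Icc 1 (n - 1), ‖f n k - f n (k - 1)‖ ^ 2) * n
          = (n:ℝ) * ∑ k ∈ Finset.Icc 1 (n - 1), ‖f n k - f n (k - 1)‖ ^ 2 := by ring
        _ ≤ C := hsum n
    have hcast : ((j - i : ℕ) : ℝ) = (j : ℝ) - i := Nat.cast_sub hij
    calc ‖f n j - f n i‖ ^ 2
        ≤ ((j - i : ℕ) : ℝ) * ∑ k ∈ Finset.range (j - i), ‖f n (i + (k + 1)) - f n (i + k)‖ ^ 2 :=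
          hsq
      _ ≤ ((j - i : ℕ) : ℝ) * (C / n) := by
          apply mul_le_mul_of_nonneg_left _ (by positivity)
          rw [hre]; exact le_trans hsub hfull
      _ = C * (((j : ℝ) - i) / n) := by rw [hcast]; ring
  -- uniform bound on grid values
  have hsqrtC : ∀ n : ℕ, ‖f n 0‖ ≤ Real.sqrt C := by
    intro n
    exact (Real.le_sqrt (norm_nonneg _) hCnn).mpr (hC0 n)
  have hval : ∀ n i : ℕ, i ≤ n - 1 → ‖f n i‖ ≤ 2 * Real.sqrt C := by
    intro n i hi
    have hs0 : (0:ℝ) ≤ Real.sqrt C := Real.sqrt_nonneg _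
    rcases Nat.eq_zero_or_pos n with hn0 | hn1
    · subst hn0
      have hi0 : i = 0 := by omega
      subst hi0
      linarith [hsqrtC 0]
    · have hd := lemD n hn1 0 i (Nat.zero_le _) hi
      have hnposR : (0:ℝ) < n := by exact_mod_cast hn1
      have hin : ((i:ℝ) - (0:ℕ)) / n ≤ 1 := by
        have h1 : (i:ℝ) ≤ n := by exact_mod_cast (by omega : i ≤ n)
        rw [div_le_one hnposR]
        push_cast
        linarith
      have hd2 : ‖f n i - f n 0‖ ^ 2 ≤ C := by
        calc ‖f n i - f n 0‖ ^ 2 ≤ C * (((i:ℝ) - (0:ℕ)) / n) := hd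
          _ ≤ C * 1 := mul_le_mul_of_nonneg_left hin hCnn
          _ = C := mul_one C
      have hd3 : ‖f n i - f n 0‖ ≤ Real.sqrt C :=
        (Real.le_sqrt (norm_nonneg _) hCnn).mpr hd2
      calc ‖f n i‖ = ‖f n 0 + (f n i - f n 0)‖ := by congr 1; abel
        _ ≤ ‖f n 0‖ + ‖f n i - f n 0‖ := norm_add_le _ _
        _ ≤ 2 * Real.sqrt C := by linarith [hsqrtC n]
  -- continuity estimate for the piecewise constant extensions
  have key : ∀ n : ℕ, 1 ≤ n → ∀ s ∈ Icc (0:ℝ) 1, ∀ t ∈ Icc (0:ℝ) 1,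
      ‖f n (min ⌊(n:ℝ) * s⌋₊ (n - 1)) - f n (min ⌊(n:ℝ) * t⌋₊ (n - 1))‖ ^ 2
        ≤ C * (|s - t| + 2 / n) := by
    intro n hn
    have hnpos : (0:ℝ) < n := by exact_mod_cast hn
    have aux : ∀ s ∈ Icc (0:ℝ) 1, ∀ t ∈ Icc (0:ℝ) 1,
        min ⌊(n:ℝ) * t⌋₊ (n - 1) ≤ min ⌊(n:ℝ) * s⌋₊ (n - 1) →
        ‖f n (min ⌊(n:ℝ) * s⌋₊ (n - 1)) - f n (min ⌊(n:ℝ) * t⌋₊ (n - 1))‖ ^ 2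
          ≤ C * (|s - t| + 2 / n) := by
      intro s hs t ht hle
      set i := min ⌊(n:ℝ) * t⌋₊ (n - 1) with hi_def
      set j := min ⌊(n:ℝ) * s⌋₊ (n - 1) with hj_def
      have hjb : j ≤ n - 1 := min_le_right _ _
      have hD := lemD n hn i j hle hjb
      have hgap : ((j:ℝ) - i) ≤ (n:ℝ) * |s - t| + 2 := by
        have habs : (n:ℝ) * s - (n:ℝ) * t ≤ (n:ℝ) * |s - t| := by
          have h1 : s - t ≤ |s - t| := le_abs_self _
          nlinarith [Nat.cast_nonneg (α := ℝ) n]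
        rcases le_or_gt (⌊(n:ℝ) * t⌋₊) (n - 1) with hb | hb
        · have hieq : i = ⌊(n:ℝ) * t⌋₊ := min_eq_left hb
          have hja : (j:ℝ) ≤ (n:ℝ) * s := by
            have h1 : ((⌊(n:ℝ) * s⌋₊ : ℕ) : ℝ) ≤ (n:ℝ) * s :=
              Nat.floor_le (by nlinarith [hs.1])
            have h2 : (j:ℝ) ≤ ((⌊(n:ℝ) * s⌋₊ : ℕ) : ℝ) := by
              exact_mod_cast min_le_left _ _
            linarith
          have hib : (n:ℝ) * t < (i:ℝ) + 1 := by
            rw [hieq]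
            exact_mod_cast Nat.lt_floor_add_one ((n:ℝ) * t)
          linarith
        · have hieq : i = n - 1 := min_eq_right hb.le
          have hji : j ≤ i := by omega
          have hij2 : i = j := le_antisymm hle hji
          rw [hij2]
          have h0 : (0:ℝ) ≤ (n:ℝ) * |s - t| := by positivity
          linarith
      calc ‖f n j - f n i‖ ^ 2 ≤ C * (((j:ℝ) - i) / n) := hD
        _ ≤ C * (|s - t| + 2 / n) := by
            apply mul_le_mul_of_nonneg_left _ hCnn
            rw [div_le_iff₀ hnpos]
            have he : (|s - t| + 2 / n) * n = (n:ℝ) * |s - t| + 2 := by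
              field_simp
            rw [he]; exact hgap
    intro s hs t ht
    rcases le_total (min ⌊(n:ℝ) * t⌋₊ (n - 1)) (min ⌊(n:ℝ) * s⌋₊ (n - 1)) with h | h
    · exact aux s hs t ht h
    · have := aux t ht s hs h
      rwa [norm_sub_rev, abs_sub_comm] at this
  -- compactness of the values at rational points
  set u : ℕ → ℚ → EuclideanSpace ℝ (Fin κ) :=
    fun n q => f n (min ⌊(n:ℝ) * (q:ℝ)⌋₊ (n - 1)) with hu_def
  have humem : ∀ n, u n ∈ Set.pi (Set.univ : Set ℚ)
      (fun _ => Metric.closedBall (0 : EuclideanSpace ℝ (Fin κ)) (2 * Real.sqrt C)) := by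
    intro n
    rw [Set.mem_univ_pi]
    intro q
    rw [Metric.mem_closedBall, dist_zero_right]
    simp only [hu_def]
    exact hval n _ (min_le_right _ _)
  have hcomp : IsCompact (Set.pi (Set.univ : Set ℚ)
      (fun _ : ℚ => Metric.closedBall (0 : EuclideanSpace ℝ (Fin κ)) (2 * Real.sqrt C))) :=
    isCompact_univ_pi fun _ => isCompact_closedBall _ _
  obtain ⟨v, -, φ, hφ, hconv⟩ := hcomp.tendsto_subseq humem
  have hpt : ∀ q : ℚ, Tendsto (fun m => u (φ m) q) atTop (𝓝 (v q)) := fun q =>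
    tendsto_pi_nhds.mp hconv q
  -- the piecewise constant functions along the subsequence
  set G : ℕ → ℝ → EuclideanSpace ℝ (Fin κ) :=
    fun m t => f (φ m) (min ⌊((φ m : ℕ) : ℝ) * t⌋₊ (φ m - 1)) with hG_def
  -- uniform Cauchy property on [0,1]
  have UC : ∀ ε : ℝ, 0 < ε → ∃ M : ℕ, 1 ≤ M ∧ ∀ m ≥ M, ∀ m' ≥ M, ∀ t ∈ Icc (0:ℝ) 1,
      ‖G m t - G m' t‖ ≤ ε := by
    intro ε hε
    set δ : ℝ := min 1 (ε ^ 2 / (64 * (C + 1))) with hδ_def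
    have hδpos : 0 < δ := lt_min one_pos (by positivity)
    have hδ1 : δ ≤ 1 := min_le_left _ _
    have hδ2 : δ ≤ ε ^ 2 / (64 * (C + 1)) := min_le_right _ _
    have hδ2' : δ * (64 * (C + 1)) ≤ ε ^ 2 := by
      rw [← le_div_iff₀ (by positivity)]; exact hδ2
    set N : ℕ := ⌈1 / δ⌉₊ with hN_def
    have hNpos : 0 < N := Nat.ceil_pos.mpr (by positivity)
    have hNposR : (0:ℝ) < N := by exact_mod_cast hNpos
    have hNδ : 1 / (N:ℝ) ≤ δ := by
      have h1 : 1 / δ ≤ (N:ℝ) := Nat.le_ceil _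
      rw [div_le_iff₀ hNposR]
      have h2 : δ * (1 / δ) ≤ δ * N := mul_le_mul_of_nonneg_left h1 hδpos.le
      rw [mul_one_div_cancel hδpos.ne'] at h2
      linarith [mul_comm δ (N:ℝ)]
    -- eventual closeness at the net points
    have hev : ∀ᶠ m in atTop, ∀ k ∈ Finset.range (N + 1),
        dist (u (φ m) ((k : ℚ) / (N : ℚ))) (v ((k : ℚ) / (N : ℚ))) < ε / 8 := by
      rw [eventually_all_finset]
      intro k _
      obtain ⟨M₀, hM₀⟩ := Metric.tendsto_atTop.mp (hpt ((k : ℚ) / (N : ℚ))) (ε / 8)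
        (by positivity)
      exact eventually_atTop.mpr ⟨M₀, hM₀⟩
    obtain ⟨M₂, hM₂⟩ := eventually_atTop.mp hev
    refine ⟨M₂ + ⌈2 / δ⌉₊ + 1, by omega, ?_⟩
    intro m hm m' hm' t ht
    have hφub : ∀ w : ℕ, w ≥ M₂ + ⌈2 / δ⌉₊ + 1 → 1 ≤ φ w ∧ 2 / ((φ w : ℕ) : ℝ) ≤ δ := by
      intro w hw
      have hw1 : 1 ≤ φ w := le_trans (by omega) hφ.le_apply
      refine ⟨hw1, ?_⟩
      have hφwpos : (0:ℝ) < ((φ w : ℕ) : ℝ) := by exact_mod_cast hw1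
      have h1 : 2 / δ ≤ ((φ w : ℕ) : ℝ) := by
        calc 2 / δ ≤ (⌈2 / δ⌉₊ : ℝ) := Nat.le_ceil _
          _ ≤ (w : ℝ) := by exact_mod_cast (by omega : ⌈2 / δ⌉₊ ≤ w)
          _ ≤ ((φ w : ℕ) : ℝ) := by exact_mod_cast hφ.le_apply
      rw [div_le_iff₀ hφwpos]
      have h2 := mul_le_mul_of_nonneg_right h1 hδpos.le
      rw [div_mul_cancel₀ _ hδpos.ne'] at h2
      linarith [mul_comm ((φ w : ℕ) : ℝ) δ]
    -- the net point
    set k : ℕ := ⌊(N:ℝ) * t⌋₊ with hk_def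
    have hkN : k ≤ N := by
      have h1 : (N:ℝ) * t ≤ (N:ℝ) := by nlinarith [ht.2]
      have h2 := Nat.floor_mono h1
      rwa [Nat.floor_natCast] at h2
    have hkmem : k ∈ Finset.range (N + 1) := Finset.mem_range.mpr (by omega)
    set q : ℚ := (k : ℚ) / (N : ℚ) with hq_def
    have hqcast : ((q : ℚ) : ℝ) = (k:ℝ) / (N:ℝ) := by rw [hq_def]; push_cast; ring
    have hqmem : ((q : ℚ) : ℝ) ∈ Icc (0:ℝ) 1 := by
      rw [hqcast]
      constructor
      · positivity
      · rw [div_le_one hNposR]; exact_mod_cast hkN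
    have hfl : (k:ℝ) ≤ (N:ℝ) * t := Nat.floor_le (by nlinarith [ht.1])
    have hfu : (N:ℝ) * t < (k:ℝ) + 1 := by
      exact_mod_cast Nat.lt_floor_add_one ((N:ℝ) * t)
    have hqt : |t - ((q : ℚ) : ℝ)| ≤ δ := by
      rw [hqcast, abs_le]
      constructor
      · have h3 : (k:ℝ) / N ≤ t := by
          rw [div_le_iff₀ hNposR]; nlinarith
        linarith
      · have h3 : t ≤ ((k:ℝ) + 1) / N := by
          rw [le_div_iff₀ hNposR]; nlinarith
        have h4 : ((k:ℝ) + 1) / N = (k:ℝ) / N + 1 / N := by ring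
        linarith
    -- middle term
    have hmid : ‖G m ((q:ℚ):ℝ) - G m' ((q:ℚ):ℝ)‖ ≤ ε / 4 := by
      have e1 : G m ((q:ℚ):ℝ) = u (φ m) q := by simp only [hG_def, hu_def]
      have e2 : G m' ((q:ℚ):ℝ) = u (φ m') q := by simp only [hG_def, hu_def]
      rw [e1, e2, ← dist_eq_norm]
      have h1 := hM₂ m (by omega) k hkmem
      have h2 := hM₂ m' (by omega) k hkmem
      calc dist (u (φ m) q) (u (φ m') q)
          ≤ dist (u (φ m) q) (v q) + dist (v q) (u (φ m') q) := dist_triangle _ _ _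
        _ ≤ ε / 8 + ε / 8 := by
            rw [dist_comm (v q)]
            exact add_le_add h1.le h2.le
        _ = ε / 4 := by ring
    -- side terms
    have hside : ∀ w : ℕ, w ≥ M₂ + ⌈2 / δ⌉₊ + 1 → ‖G w t - G w ((q:ℚ):ℝ)‖ ≤ ε / 4 := by
      intro w hw
      obtain ⟨hw1, hw2⟩ := hφub w hw
      have hk2 := key (φ w) hw1 t ht ((q:ℚ):ℝ) hqmem
      have hb : C * (|t - ((q:ℚ):ℝ)| + 2 / ((φ w : ℕ):ℝ)) ≤ (ε / 4) ^ 2 := by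
        have h1 : |t - ((q:ℚ):ℝ)| + 2 / ((φ w : ℕ):ℝ) ≤ 2 * δ := by linarith
        calc C * (|t - ((q:ℚ):ℝ)| + 2 / ((φ w : ℕ):ℝ)) ≤ C * (2 * δ) :=
              mul_le_mul_of_nonneg_left h1 hCnn
          _ ≤ (ε / 4) ^ 2 := by nlinarith [mul_nonneg hCnn hδpos.le, hδpos.le]
      have hsq2 : ‖G w t - G w ((q:ℚ):ℝ)‖ ^ 2 ≤ (ε / 4) ^ 2 := by
        simp only [hG_def]
        exact le_trans hk2 hb
      nlinarith [norm_nonneg (G w t - G w ((q:ℚ):ℝ))]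
    calc ‖G m t - G m' t‖ = dist (G m t) (G m' t) := (dist_eq_norm _ _).symm
      _ ≤ dist (G m t) (G m ((q:ℚ):ℝ)) + dist (G m ((q:ℚ):ℝ)) (G m' ((q:ℚ):ℝ))
            + dist (G m' ((q:ℚ):ℝ)) (G m' t) := dist_triangle4 _ _ _ _
      _ ≤ ε / 4 + ε / 4 + ε / 4 := by
          rw [dist_eq_norm, dist_eq_norm, dist_eq_norm]
          have h3 := hside m' hm'
          rw [norm_sub_rev] at h3
          exact add_le_add (add_le_add (hside m hm) hmid) h3
      _ ≤ ε := by linarith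
  -- Cauchy sequences at each point of [0,1]
  have hcauchy : ∀ t ∈ Icc (0:ℝ) 1, CauchySeq (fun m => G m t) := by
    intro t ht
    rw [Metric.cauchySeq_iff]
    intro ε hε
    obtain ⟨M, -, hM⟩ := UC (ε / 2) (by positivity)
    refine ⟨M, fun m hm m' hm' => ?_⟩
    have := hM m hm m' hm' t ht
    rw [dist_eq_norm]
    linarith
  -- the limit function
  set F : ℝ → EuclideanSpace ℝ (Fin κ) :=
    fun t => limUnder atTop (fun m => G m t) with hF_def
  have hFt : ∀ t ∈ Icc (0:ℝ) 1, Tendsto (fun m => G m t) atTop (𝓝 (F t)) := fun t ht =>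
    (hcauchy t ht).tendsto_limUnder
  -- Hölder estimate for F (squared)
  have hHol : ∀ s ∈ Icc (0:ℝ) 1, ∀ t ∈ Icc (0:ℝ) 1, ‖F s - F t‖ ^ 2 ≤ C * |s - t| := by
    intro s hs t ht
    have hlim : Tendsto (fun m => ‖G m s - G m t‖ ^ 2) atTop (𝓝 (‖F s - F t‖ ^ 2)) :=
      (((hFt s hs).sub (hFt t ht)).norm).pow 2
    have hbound : ∀ η : ℝ, 0 < η → ‖F s - F t‖ ^ 2 ≤ C * |s - t| + η := by
      intro η hη
      refine le_of_tendsto hlim ?_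
      rw [eventually_atTop]
      refine ⟨max 1 ⌈2 * C / η⌉₊, fun m hm => ?_⟩
      have h1m : 1 ≤ m := le_trans (le_max_left _ _) hm
      have hφ1 : 1 ≤ φ m := le_trans h1m hφ.le_apply
      have hφpos : (0:ℝ) < ((φ m : ℕ) : ℝ) := by exact_mod_cast hφ1
      have hφm : 2 * C / η ≤ ((φ m : ℕ) : ℝ) := by
        calc 2 * C / η ≤ (⌈2 * C / η⌉₊ : ℝ) := Nat.le_ceil _
          _ ≤ (m : ℝ) := by exact_mod_cast le_trans (le_max_right _ _) hm
          _ ≤ ((φ m : ℕ) : ℝ) := by exact_mod_cast hφ.le_apply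
      have hk2 := key (φ m) hφ1 s hs t ht
      have h2 : C * (2 / ((φ m : ℕ) : ℝ)) ≤ η := by
        have h3 : 2 * C ≤ ((φ m : ℕ) : ℝ) * η := (div_le_iff₀ hη).mp hφm
        have h4 : C * (2 / ((φ m : ℕ) : ℝ)) = (2 * C) / ((φ m : ℕ) : ℝ) := by ring
        rw [h4, div_le_iff₀ hφpos]
        linarith [mul_comm ((φ m : ℕ) : ℝ) η]
      calc ‖G m s - G m t‖ ^ 2 ≤ C * (|s - t| + 2 / ((φ m : ℕ) : ℝ)) := hk2
        _ = C * |s - t| + C * (2 / ((φ m : ℕ) : ℝ)) := by ring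
        _ ≤ C * |s - t| + η := by linarith
    by_contra hcon
    push_neg at hcon
    have := hbound ((‖F s - F t‖ ^ 2 - C * |s - t|) / 2) (by linarith)
    linarith
  refine ⟨φ, F, hφ, ?_, ?_⟩
  · -- Hölder continuity
    intro γ hγ hγ2
    refine ⟨Real.sqrt C, ?_⟩
    intro s hs t ht
    rcases eq_or_ne s t with rfl | hst
    · simp [Real.zero_rpow hγ.ne']
    · have habs : 0 < |s - t| := abs_pos.mpr (sub_ne_zero.mpr hst)
      have habs1 : |s - t| ≤ 1 := by
        rw [abs_le]
        constructor <;> [linarith [hs.1, ht.2]; linarith [hs.2, ht.1]]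
      have h2 := hHol s hs t ht
      have hle : ‖F s - F t‖ ≤ Real.sqrt C * |s - t| ^ ((1:ℝ) / 2) := by
        rw [← Real.sqrt_eq_rpow, ← Real.sqrt_mul hCnn]
        exact (Real.le_sqrt (norm_nonneg _) (by positivity)).mpr h2
      refine hle.trans ?_
      apply mul_le_mul_of_nonneg_left _ (Real.sqrt_nonneg C)
      exact Real.rpow_le_rpow_of_exponent_ge habs habs1 (by linarith)
  · -- convergence at grid points
    intro ε hε
    obtain ⟨M, hM1, hM⟩ := UC (ε / 2) (by positivity)
    refine ⟨M, fun m hm i hi => ?_⟩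
    have hφ1 : 1 ≤ φ m := le_trans (le_trans hM1 hm) hφ.le_apply
    have hφpos : (0:ℝ) < ((φ m : ℕ) : ℝ) := by exact_mod_cast hφ1
    have ht : (i : ℝ) / ((φ m : ℕ) : ℝ) ∈ Icc (0:ℝ) 1 := by
      constructor
      · positivity
      · rw [div_le_one hφpos]; exact_mod_cast hi.le
    have hGt : G m ((i : ℝ) / ((φ m : ℕ) : ℝ)) = f (φ m) i := by
      have h1 : ((φ m : ℕ) : ℝ) * ((i : ℝ) / ((φ m : ℕ) : ℝ)) = (i : ℝ) := by
        field_simp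
      simp only [hG_def]
      rw [h1, Nat.floor_natCast, min_eq_left (by omega : i ≤ φ m - 1)]
    have hlim2 : Tendsto (fun m' => ‖G m ((i : ℝ) / ((φ m : ℕ) : ℝ)) - G m' ((i : ℝ) / ((φ m : ℕ) : ℝ))‖)
        atTop (𝓝 ‖G m ((i : ℝ) / ((φ m : ℕ) : ℝ)) - F ((i : ℝ) / ((φ m : ℕ) : ℝ))‖) :=
      (tendsto_const_nhds.sub (hFt _ ht)).norm
    have hle : ‖G m ((i : ℝ) / ((φ m : ℕ) : ℝ)) - F ((i : ℝ) / ((φ m : ℕ) : ℝ))‖ ≤ ε / 2 := by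
      refine le_of_tendsto hlim2 ?_
      rw [eventually_atTop]
      exact ⟨M, fun m' hm' => hM m hm m' hm' _ ht⟩
    rw [← hGt]
    calc ‖G m ((i : ℝ) / ((φ m : ℕ) : ℝ)) - F ((i : ℝ) / ((φ m : ℕ) : ℝ))‖ ≤ ε / 2 := hle
      _ < ε := by linarith
end
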